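/- Let d be a positive natural number and let p be a probability measure on ℝ^d (as EuclideanSpace ℝ (Fin d)) with finite second moments, mean m_p = ∫ x dp(x), and covariance matrix Σ_p = ∫ (x − m_p)(x − m_p)ᵀ dp(x), and assume Σ_p is positive definite and klDiv(p, N(m_p, Σ_p)) < ∞. Then for every m ∈ ℝ^d and every positive-definite d×d matrix S, klDiv(p, N(m_p, Σ_p)) ≤ klDiv(p, N(m, S)); that is, among all Gaussian measures, the moment-matched Gaussian minimises the Kullback–Leibler divergence from p. -/

import Mathlib

open MeasureTheory
open scoped ENNReal Classical

/-- Kullback–Leibler divergence of `μ` from `ν`: `∫ log (dμ/dν) dμ` if `μ ≪ ν` (and the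
log-likelihood ratio is integrable), `+∞` otherwise. -/
noncomputable def klDiv {X : Type*} [MeasurableSpace X] (μ ν : Measure X) : ℝ≥0∞ :=
  if μ ≪ ν ∧ Integrable (llr μ ν) μ then ENNReal.ofReal (∫ x, llr μ ν x ∂μ) else ⊤

/-- Density of the multivariate Gaussian with mean `m` and covariance matrix `S` on `ℝ^d`. -/
noncomputable def gaussianPdf {d : ℕ} (m : EuclideanSpace ℝ (Fin d))
    (S : Matrix (Fin d) (Fin d) ℝ) (x : EuclideanSpace ℝ (Fin d)) : ℝ≥0∞ :=
  ENNReal.ofReal ((Real.sqrt ((2 * Real.pi) ^ d * S.det))⁻¹ *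
    Real.exp (-(1 / 2) * dotProduct (x - m) (S⁻¹.mulVec (x - m))))

/-- The multivariate Gaussian probability measure `N(m, S)` on `ℝ^d`, for a mean vector `m`
and a (positive-definite) covariance matrix `S`. -/
noncomputable def gaussianMeasure {d : ℕ} (m : EuclideanSpace ℝ (Fin d))
    (S : Matrix (Fin d) (Fin d) ℝ) : Measure (EuclideanSpace ℝ (Fin d)) :=
  volume.withDensity (gaussianPdf m S)

/-!
Since `p ≪ N(mp, Sp) ≪ volume`, the log-likelihood ratios of `p` against the two Gaussians differ
`p`-a.e. by `log φ(mp, Sp) - log φ(m, S)`, where `φ` is the Gaussian density; so it suffices that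
the moment-matched Gaussian has the largest expected log-density under `p`. That expectation only
sees the first two moments of `p`: `E[(x - m)ᵀ S⁻¹ (x - m)] = tr (S⁻¹ Sp) + (mp - m)ᵀ S⁻¹ (mp - m)`.
The resulting gap is `½ (tr (S⁻¹ Sp) - d - log det (S⁻¹ Sp) + (mp - m)ᵀ S⁻¹ (mp - m))`, which is
nonnegative because `t - 1 - log t ≥ 0` on the eigenvalues of `B S⁻¹ Bᴴ`, where `Sp = Bᴴ B`.
-/

open scoped Matrix MatrixOrder ProbabilityTheory
open ProbabilityTheory

namespace Matrix

lemma dotProduct_mulVec_self_eq_sum {ι R : Type*} [Fintype ι] [CommSemiring R]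
    (M : Matrix ι ι R) (v : ι → R) : v ⬝ᵥ M *ᵥ v = ∑ i, ∑ j, M i j * (v i * v j) := by
  simp only [dotProduct, mulVec, Finset.mul_sum]
  exact Finset.sum_congr rfl fun i _ => Finset.sum_congr rfl fun j _ => by ring

variable {n : Type*} [Fintype n] [DecidableEq n]

lemma PosDef.card_add_log_det_le_trace {A : Matrix n n ℝ} (hA : A.PosDef) :
    (Fintype.card n : ℝ) + Real.log A.det ≤ A.trace := by
  have hdet : A.det = ∏ i, hA.1.eigenvalues i := by simpa using hA.1.det_eq_prod_eigenvalues
  have htrace : A.trace = ∑ i, hA.1.eigenvalues i := by simpa using hA.1.trace_eq_sum_eigenvalues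
  rw [hdet, htrace, Real.log_prod fun i _ => (hA.eigenvalues_pos i).ne', Fintype.card_eq_sum_ones,
    Nat.cast_sum, Nat.cast_one, ← Finset.sum_add_distrib]
  gcongr with i
  linarith [Real.log_le_sub_one_of_pos (hA.eigenvalues_pos i)]

lemma PosDef.card_add_log_det_sub_log_det_le_trace_inv_mul {S T : Matrix n n ℝ} (hS : S.PosDef)
    (hT : T.PosDef) :
    (Fintype.card n : ℝ) + Real.log T.det - Real.log S.det ≤ (S⁻¹ * T).trace := by
  obtain ⟨B, rfl⟩ := CStarAlgebra.nonneg_iff_eq_star_mul_self.mp hT.posSemidef.nonneg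
  have hdet : (B * S⁻¹ * Bᴴ).det = (star B * B).det * S.det⁻¹ := by
    rw [det_mul, det_mul, det_mul, det_nonsing_inv, Ring.inverse_eq_inv', star_eq_conjTranspose]
    ring
  have hA : (B * S⁻¹ * Bᴴ).PosDef := by
    rw [(hS.inv.posSemidef.mul_mul_conjTranspose_same B).posDef_iff_det_ne_zero, hdet]
    exact mul_ne_zero hT.det_pos.ne' (inv_ne_zero hS.det_pos.ne')
  have key := hA.card_add_log_det_le_trace
  rw [hdet, Real.log_mul hT.det_pos.ne' (inv_ne_zero hS.det_pos.ne'), Real.log_inv,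
    trace_mul_cycle, ← star_eq_conjTranspose, trace_mul_comm] at key
  linarith

end Matrix

namespace MeasureTheory

lemma llr_withDensity_right_ae_eq {α : Type*} [MeasurableSpace α] {μ ν : Measure α}
    [SigmaFinite μ] [SigmaFinite ν] {f : α → ℝ≥0∞} (hf : Measurable f) (hf_ne_zero : ∀ x, f x ≠ 0)
    (hf_ne_top : ∀ x, f x ≠ ∞) (hμν : μ ≪ ν) :
    llr μ (ν.withDensity f) =ᵐ[μ] fun x => llr μ ν x - Real.log (f x).toReal := by
  filter_upwards [hμν.ae_le (Measure.rnDeriv_withDensity_right μ ν hf.aemeasurable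
      (ae_of_all _ hf_ne_zero) (ae_of_all _ hf_ne_top)), Measure.rnDeriv_pos hμν,
      hμν.ae_le (Measure.rnDeriv_lt_top μ ν)] with x hx hpos hlt
  rw [llr, llr, hx, ENNReal.toReal_mul, ENNReal.toReal_inv,
    Real.log_mul (inv_ne_zero (ENNReal.toReal_pos (hf_ne_zero x) (hf_ne_top x)).ne')
      (ENNReal.toReal_pos hpos.ne' hlt.ne).ne', Real.log_inv]
  ring

end MeasureTheory

namespace ProbabilityTheory

variable {Ω ι : Type*} [MeasurableSpace Ω] {μ : Measure Ω} [IsProbabilityMeasure μ]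

lemma integral_sub_mul_sub {X Y : Ω → ℝ} (hX : MemLp X 2 μ) (hY : MemLp Y 2 μ) (a b : ℝ) :
    ∫ ω, (X ω - a) * (Y ω - b) ∂μ = cov[X, Y; μ] + (μ[X] - a) * (μ[Y] - b) := by
  have hXi := hX.integrable one_le_two
  have hYi := hY.integrable one_le_two
  have h := covariance_eq_sub (μ := μ) (X := fun ω => X ω - a) (Y := fun ω => Y ω - b)
    (hX.sub (memLp_const a)) (hY.sub (memLp_const b))
  rw [covariance_sub_const_left hXi, covariance_sub_const_right hYi,
    integral_sub hXi (integrable_const a), integral_sub hYi (integrable_const b)] at h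
  simp only [Pi.mul_apply, integral_const, probReal_univ, one_smul] at h
  linarith

variable [Fintype ι] {X : ι → Ω → ℝ}

lemma integrable_dotProduct_mulVec_sub (hX : ∀ i, MemLp (X i) 2 μ) (M : Matrix ι ι ℝ)
    (c : ι → ℝ) :
    Integrable (fun ω => (fun i => X i ω - c i) ⬝ᵥ M *ᵥ (fun i => X i ω - c i)) μ := by
  simp only [Matrix.dotProduct_mulVec_self_eq_sum]
  exact integrable_finsetSum _ fun i _ => integrable_finsetSum _ fun j _ =>
    (((hX i).sub (memLp_const (c i))).integrable_mul ((hX j).sub (memLp_const (c j)))).const_mul _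

lemma integral_dotProduct_mulVec_sub (hX : ∀ i, MemLp (X i) 2 μ) (M : Matrix ι ι ℝ)
    (c : ι → ℝ) :
    ∫ ω, (fun i => X i ω - c i) ⬝ᵥ M *ᵥ (fun i => X i ω - c i) ∂μ
      = (M * Matrix.of fun i j => cov[X i, X j; μ]).trace
        + (fun i => μ[X i] - c i) ⬝ᵥ M *ᵥ (fun i => μ[X i] - c i) := by
  have hprod : ∀ i j, Integrable (fun ω => M i j * ((X i ω - c i) * (X j ω - c j))) μ :=
    fun i j => (((hX i).sub (memLp_const (c i))).integrable_mul
      ((hX j).sub (memLp_const (c j)))).const_mul _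
  simp only [Matrix.dotProduct_mulVec_self_eq_sum]
  rw [integral_finsetSum _ fun i _ => integrable_finsetSum _ fun j _ => hprod i j]
  simp only [integral_finsetSum _ fun j _ => hprod _ j, integral_const_mul,
    integral_sub_mul_sub (hX _) (hX _), mul_add, Finset.sum_add_distrib, Matrix.trace,
    Matrix.diag, Matrix.mul_apply, Matrix.of_apply, covariance_comm (X _) (X _)]

end ProbabilityTheory

section Moments

variable {ι : Type*} [Fintype ι] {p : Measure (EuclideanSpace ℝ ι)}

lemma memLp_two_apply_of_integrable_sq_norm (hmom : Integrable (fun x => ‖x‖ ^ 2) p) (i : ι) :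
    MemLp (fun x : EuclideanSpace ℝ ι => x i) 2 p :=
  memLp_piLp_iff.1 ((memLp_two_iff_integrable_sq_norm aestronglyMeasurable_id).2 hmom) i

lemma integrable_dotProduct_mulVec_sub_of_integrable_sq_norm [IsProbabilityMeasure p]
    (hmom : Integrable (fun x => ‖x‖ ^ 2) p) (M : Matrix ι ι ℝ) (c : EuclideanSpace ℝ ι) :
    Integrable (fun x : EuclideanSpace ℝ ι => dotProduct (x - c) (M.mulVec (x - c))) p :=
  integrable_dotProduct_mulVec_sub (memLp_two_apply_of_integrable_sq_norm hmom) M c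

lemma integral_dotProduct_mulVec_sub_eq_trace_add [IsProbabilityMeasure p]
    (hmom : Integrable (fun x => ‖x‖ ^ 2) p) {mp : EuclideanSpace ℝ ι} (hmp : mp = ∫ x, x ∂p)
    {Sp : Matrix ι ι ℝ}
    (hSp : ∀ i j, Sp i j = ∫ x, (x i - mp i) * (x j - mp j) ∂p)
    (M : Matrix ι ι ℝ) (c : EuclideanSpace ℝ ι) :
    ∫ x, dotProduct (x - c) (M.mulVec (x - c)) ∂p
      = (M * Sp).trace + dotProduct (mp - c) (M.mulVec (mp - c)) := by
  have hmean : ∀ i, ∫ x, x i ∂p = mp i := fun i => by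
    rw [hmp, eval_integral_piLp fun j =>
      (memLp_two_apply_of_integrable_sq_norm hmom j).integrable one_le_two]
  have hcov : (Matrix.of fun i j => cov[fun x => x i, fun x => x j; p]) = Sp := by
    ext i j
    rw [hSp, Matrix.of_apply, covariance, hmean, hmean]
  have h := integral_dotProduct_mulVec_sub (memLp_two_apply_of_integrable_sq_norm hmom) M c
  simp only [hcov, hmean] at h
  exact h

end Moments

section Gaussian

variable {d : ℕ} {m : EuclideanSpace ℝ (Fin d)} {S : Matrix (Fin d) (Fin d) ℝ}

lemma measurable_gaussianPdf (m : EuclideanSpace ℝ (Fin d)) (S : Matrix (Fin d) (Fin d) ℝ) :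
    Measurable (gaussianPdf m S) := by
  unfold gaussianPdf
  fun_prop

instance (m : EuclideanSpace ℝ (Fin d)) (S : Matrix (Fin d) (Fin d) ℝ) :
    SigmaFinite (gaussianMeasure m S) :=
  SigmaFinite.withDensity_ofReal _

lemma gaussianPdf_pos (hS : S.PosDef) (x : EuclideanSpace ℝ (Fin d)) : 0 < gaussianPdf m S x := by
  unfold gaussianPdf
  have := hS.det_pos
  positivity

lemma log_toReal_gaussianPdf (hS : S.PosDef) (x : EuclideanSpace ℝ (Fin d)) :
    Real.log (gaussianPdf m S x).toReal = -(1 / 2) * Real.log ((2 * Real.pi) ^ d * S.det)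
      - (1 / 2) * dotProduct (x - m) (S⁻¹.mulVec (x - m)) := by
  have := hS.det_pos
  rw [gaussianPdf, ENNReal.toReal_ofReal (by positivity), Real.log_mul (by positivity)
    (Real.exp_pos _).ne', Real.log_inv, Real.log_exp, Real.log_sqrt (by positivity)]
  ring

lemma llr_gaussianMeasure_ae_eq {p : Measure (EuclideanSpace ℝ (Fin d))} [SigmaFinite p]
    (hp : p ≪ volume) (hS : S.PosDef) :
    llr p (gaussianMeasure m S)
      =ᵐ[p] fun x => llr p volume x - Real.log (gaussianPdf m S x).toReal :=
  llr_withDensity_right_ae_eq (measurable_gaussianPdf m S) (fun x => (gaussianPdf_pos hS x).ne')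
    (fun _ => ENNReal.ofReal_ne_top) hp

end Gaussian

section CrossEntropy

variable {d : ℕ} {p : Measure (EuclideanSpace ℝ (Fin d))} [IsProbabilityMeasure p]
  {m : EuclideanSpace ℝ (Fin d)} {S : Matrix (Fin d) (Fin d) ℝ}

lemma integrable_log_toReal_gaussianPdf (hmom : Integrable (fun x => ‖x‖ ^ 2) p)
    (hS : S.PosDef) : Integrable (fun x => Real.log (gaussianPdf m S x).toReal) p := by
  simp only [log_toReal_gaussianPdf hS]
  exact (integrable_const _).sub
    ((integrable_dotProduct_mulVec_sub_of_integrable_sq_norm hmom _ m).const_mul _)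

lemma integral_log_toReal_gaussianPdf (hmom : Integrable (fun x => ‖x‖ ^ 2) p)
    {mp : EuclideanSpace ℝ (Fin d)} (hmp : mp = ∫ x, x ∂p) {Sp : Matrix (Fin d) (Fin d) ℝ}
    (hSp : ∀ i j, Sp i j = ∫ x, (x i - mp i) * (x j - mp j) ∂p) (hS : S.PosDef) :
    ∫ x, Real.log (gaussianPdf m S x).toReal ∂p
      = -(1 / 2) * (Real.log ((2 * Real.pi) ^ d * S.det) + (S⁻¹ * Sp).trace
        + dotProduct (mp - m) (S⁻¹.mulVec (mp - m))) := by
  simp only [log_toReal_gaussianPdf hS]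
  rw [integral_sub (integrable_const _)
      ((integrable_dotProduct_mulVec_sub_of_integrable_sq_norm hmom _ m).const_mul _),
    integral_const, integral_const_mul,
    integral_dotProduct_mulVec_sub_eq_trace_add hmom hmp hSp]
  simp only [probReal_univ, one_smul]
  ring

lemma integral_log_toReal_gaussianPdf_le (hmom : Integrable (fun x => ‖x‖ ^ 2) p)
    {mp : EuclideanSpace ℝ (Fin d)} (hmp : mp = ∫ x, x ∂p) {Sp : Matrix (Fin d) (Fin d) ℝ}
    (hSp : ∀ i j, Sp i j = ∫ x, (x i - mp i) * (x j - mp j) ∂p) (hSpd : Sp.PosDef)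
    (hS : S.PosDef) :
    ∫ x, Real.log (gaussianPdf m S x).toReal ∂p
      ≤ ∫ x, Real.log (gaussianPdf mp Sp x).toReal ∂p := by
  rw [integral_log_toReal_gaussianPdf hmom hmp hSp hS,
    integral_log_toReal_gaussianPdf hmom hmp hSp hSpd,
    Matrix.nonsing_inv_mul Sp hSpd.det_pos.ne'.isUnit, Matrix.trace_one, sub_self, sub_self,
    WithLp.ofLp_zero, Matrix.mulVec_zero, dotProduct_zero,
    Real.log_mul (by positivity) hS.det_pos.ne', Real.log_mul (by positivity) hSpd.det_pos.ne']
  have hdet := hS.card_add_log_det_sub_log_det_le_trace_inv_mul hSpd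
  have hquad : 0 ≤ dotProduct (mp - m) (S⁻¹.mulVec (mp - m)) := by
    simpa using hS.inv.posSemidef.dotProduct_mulVec_nonneg (mp - m).ofLp
  simp only [Fintype.card_fin] at hdet ⊢
  linarith

end CrossEntropy

theorem momentMatched_gaussian_minimizes_klDiv_general {d : ℕ}
    (p : Measure (EuclideanSpace ℝ (Fin d))) [IsProbabilityMeasure p]
    (hmom : Integrable (fun x => ‖x‖ ^ 2) p)
    (mp : EuclideanSpace ℝ (Fin d)) (hmp : mp = ∫ x, x ∂p)
    (Sp : Matrix (Fin d) (Fin d) ℝ)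
    (hSp : ∀ i j, Sp i j = ∫ x, (x i - mp i) * (x j - mp j) ∂p)
    (hSpd : Sp.PosDef) (hfin : klDiv p (gaussianMeasure mp Sp) < ⊤) :
    ∀ (m : EuclideanSpace ℝ (Fin d)) (S : Matrix (Fin d) (Fin d) ℝ), S.PosDef →
      klDiv p (gaussianMeasure mp Sp) ≤ klDiv p (gaussianMeasure m S) := by
  intro m S hS
  by_cases h : p ≪ gaussianMeasure m S ∧ Integrable (llr p (gaussianMeasure m S)) p
  swap
  · simp [klDiv, h]
  have hp : p ≪ gaussianMeasure mp Sp ∧ Integrable (llr p (gaussianMeasure mp Sp)) p := by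
    by_contra hp
    simp [klDiv, hp] at hfin
  rw [klDiv, klDiv, if_pos hp, if_pos h]
  refine ENNReal.ofReal_le_ofReal ?_
  have hpv : p ≪ volume := hp.1.trans (withDensity_absolutelyContinuous _ _)
  have hllr : llr p (gaussianMeasure m S) =ᵐ[p] fun x => llr p (gaussianMeasure mp Sp) x
      + (Real.log (gaussianPdf mp Sp x).toReal - Real.log (gaussianPdf m S x).toReal) := by
    filter_upwards [llr_gaussianMeasure_ae_eq hpv hS, llr_gaussianMeasure_ae_eq hpv hSpd]
      with x hx hxp
    rw [hx, hxp]
    ring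
  have hint := integrable_log_toReal_gaussianPdf (m := mp) hmom hSpd
  have hint' := integrable_log_toReal_gaussianPdf (m := m) hmom hS
  rw [integral_congr_ae hllr, integral_add hp.2 (hint.sub' hint'), integral_sub hint hint']
  linarith [integral_log_toReal_gaussianPdf_le (m := m) hmom hmp hSp hSpd hS]

/-- Moment matching minimises the KL divergence to Gaussians: if `p` has finite second
moments, mean `mp`, positive-definite covariance `Sp` and finite divergence from the
moment-matched Gaussian, then `D(p ‖ N(mp, Sp)) ≤ D(p ‖ N(m, S))` for every mean `m` and
positive-definite covariance `S`. -/
theorem momentMatched_gaussian_minimizes_klDiv {d : ℕ} (hd : 0 < d)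
    (p : Measure (EuclideanSpace ℝ (Fin d))) [IsProbabilityMeasure p]
    (hmom : Integrable (fun x => ‖x‖ ^ 2) p)
    (mp : EuclideanSpace ℝ (Fin d)) (hmp : mp = ∫ x, x ∂p)
    (Sp : Matrix (Fin d) (Fin d) ℝ)
    (hSp : ∀ i j, Sp i j = ∫ x, (x i - mp i) * (x j - mp j) ∂p)
    (hSpd : Sp.PosDef) (hfin : klDiv p (gaussianMeasure mp Sp) < ⊤) :
    ∀ (m : EuclideanSpace ℝ (Fin d)) (S : Matrix (Fin d) (Fin d) ℝ), S.PosDef →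
      klDiv p (gaussianMeasure mp Sp) ≤ klDiv p (gaussianMeasure m S) :=
  momentMatched_gaussian_minimizes_klDiv_general p hmom mp hmp Sp hSp hSpd hfin
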